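/- Let A and B be disjoint finite sets with |A| = n ≥ 1, |B| = m ≥ 1, m ≤ n ≤ 2^{2^q + r}, let p, q, r ∈ ℕ, and let (h(s))_{s∈A∪B} be independent uniform [0,1] random variables. With Z_i the indicator that bucket i ∈ {0,…,2^p−1} is occupied for both A and B and the HyperMinHash bucket values coincide, f(A)_i = f(B)_i, let C = Σ_{i=0}^{2^p−1} Z_i be the total number of bucket collisions. Then E[C] ≤ 2^p ( 5/2^r + n/2^{p + 2^q + r} ). -/

import Mathlib

/-!
If bucket `i` collides, the minimum of `A` in that bucket is attained at some `s ∈ A` and some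
`t ∈ B` has a rescaled hash with the same encoding as that of `s`, so `E[C]` is at most the sum,
over the `2^p·n·m` triples `(i, s, t)`, of the probability of this event. Conditioning on
`h s = x` in the bucket, independence factorises it: the other `n - 1` elements of `A` avoid
`(i/2^p, x)`, with probability `(1 - (x - i/2^p))^(n-1)`, and `h t` lands in a fibre of the
encoding, an interval of length `2^(-ρ)/2^(r+p) ≤ (x·2^p - i + 2^(-2^q))/2^(r+p)`.
Integrating over the bucket gives `2^(-r-p) (2^p/(n(n+1)) + 2^(-2^q)/n)` per triple; summing,
with `m ≤ n`, gives `E[C] ≤ (2^p + n 2^(-2^q)) / 2^r`.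
-/

open MeasureTheory ProbabilityTheory

/-- `ρ_q(x) = min(⌊−log₂ x⌋ + 1, 2^q)`, the truncated position of the leading 1 bit. -/
noncomputable def rhoHMH (q : ℕ) (x : ℝ) : ℤ :=
  min (⌊-Real.logb 2 x⌋ + 1) (2 ^ q)

/-- `σ_r(x) = ⌊x·2^r⌋`, the next `r` bits. -/
noncomputable def sigmaHMH (r : ℕ) (x : ℝ) : ℤ :=
  ⌊x * 2 ^ r⌋

/-- The HyperMinHash bucket encoding `ĥ_{q,r}(x) = (ρ_q(x), σ_r(x·2^{ρ_q(x)} − 1))`. -/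
noncomputable def hatHMH (q r : ℕ) (x : ℝ) : ℤ × ℤ :=
  (rhoHMH q x, sigmaHMH r (x * (2 : ℝ) ^ rhoHMH q x - 1))

/-- Bucket `i` of the set `S` is occupied: some `s ∈ S` has `i·2^{−p} < h(s) < (i+1)·2^{−p}`. -/
def bucketOccupied {ι Ω : Type*} (h : ι → Ω → ℝ) (p : ℕ) (S : Finset ι) (i : ℕ) (ω : Ω) :
    Prop :=
  ∃ s ∈ S, (i : ℝ) / 2 ^ p < h s ω ∧ h s ω < ((i : ℝ) + 1) / 2 ^ p

/-- The rescaled minimum hash `min{h(s)·2^p − i : s ∈ S, i·2^{−p} < h(s) < (i+1)·2^{−p}}`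
of bucket `i` of the set `S`. -/
noncomputable def bucketMin {ι Ω : Type*} (h : ι → Ω → ℝ) (p : ℕ) (S : Finset ι) (i : ℕ)
    (ω : Ω) : ℝ :=
  sInf {x : ℝ | ∃ s ∈ S, ((i : ℝ) / 2 ^ p < h s ω ∧ h s ω < ((i : ℝ) + 1) / 2 ^ p)
    ∧ x = h s ω * 2 ^ p - i}

open scoped Classical

open Set

lemma measurable_rhoHMH (q : ℕ) : Measurable (rhoHMH q) :=
  (measurable_from_top (f := fun z : ℤ => min (z + 1) (2 ^ q))).comp
    (Real.measurable_log.div_const (Real.log 2)).neg.floor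

lemma measurable_hatHMH (q r : ℕ) : Measurable (hatHMH q r) := by
  have hpow : Measurable fun x : ℝ => (2 : ℝ) ^ rhoHMH q x :=
    measurable_from_top.comp (measurable_rhoHMH q)
  exact (measurable_rhoHMH q).prodMk
    (((measurable_id.mul hpow).sub_const 1).mul_const _).floor

lemma zpow_neg_rhoHMH_le (q : ℕ) {x : ℝ} (hx : 0 < x) :
    (2 : ℝ) ^ (-rhoHMH q x) ≤ max x ((2 : ℝ) ^ 2 ^ q)⁻¹ := by
  unfold rhoHMH
  rcases le_total (⌊-Real.logb 2 x⌋ + 1) (2 ^ q) with h | h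
  · rw [min_eq_left h]
    refine le_max_of_le_left ?_
    rw [← Real.rpow_intCast, ← Real.le_logb_iff_rpow_le one_lt_two hx]
    have := Int.lt_floor_add_one (-Real.logb 2 x)
    push_cast
    linarith
  · rw [min_eq_right h, zpow_neg]
    exact le_max_of_le_right (by norm_cast)

lemma volume_preimage_mul_sub {a : ℝ} (ha : 0 < a) (b : ℝ) (s : Set ℝ) :
    volume ((fun y => y * a - b) ⁻¹' s) = ENNReal.ofReal a⁻¹ * volume s := by
  have hcomp : (fun y => y * a - b) ⁻¹' s = (fun y => y * a) ⁻¹' ((fun z => z + -b) ⁻¹' s) := by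
    ext; simp [sub_eq_add_neg]
  rw [hcomp, Real.volume_preimage_mul_right ha.ne', measure_preimage_add_right,
    abs_of_pos (inv_pos.2 ha)]

lemma volume_hatHMH_fiber_le (q r : ℕ) (x : ℝ) :
    volume {u | hatHMH q r u = hatHMH q r x} ≤
      ENNReal.ofReal ((2 : ℝ) ^ (-rhoHMH q x) / 2 ^ r) := by
  set ρ := rhoHMH q x
  have hscale : 0 < (2 : ℝ) ^ ρ * 2 ^ r := by positivity
  have hfiber : {u | hatHMH q r u = hatHMH q r x} ⊆
      (fun u => u * ((2 : ℝ) ^ ρ * 2 ^ r) - 2 ^ r) ⁻¹'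
        Ico (sigmaHMH r (x * 2 ^ ρ - 1) : ℝ) (sigmaHMH r (x * 2 ^ ρ - 1) + 1) := by
    intro u hu
    obtain ⟨hρ, hσ⟩ := Prod.ext_iff.mp hu
    simp only [hatHMH] at hρ hσ
    rw [hρ] at hσ
    have hfloor := Int.floor_eq_iff.mp hσ
    simp only [mem_preimage, mem_Ico]
    constructor <;> linarith [hfloor.1, hfloor.2]
  calc volume {u | hatHMH q r u = hatHMH q r x}
      ≤ ENNReal.ofReal ((2 : ℝ) ^ ρ * 2 ^ r)⁻¹ * 1 := by
        refine (measure_mono hfiber).trans_eq ?_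
        rw [volume_preimage_mul_sub hscale, Real.volume_Ico, add_sub_cancel_left,
          ENNReal.ofReal_one]
    _ = ENNReal.ofReal ((2 : ℝ) ^ (-ρ) / 2 ^ r) := by
        rw [mul_one, zpow_neg, mul_inv, div_eq_mul_inv]

lemma integral_one_sub_pow (k : ℕ) : ∫ u in (0 : ℝ)..1, (1 - u) ^ k = 1 / (k + 1) := by
  rw [intervalIntegral.integral_comp_sub_left (fun u => u ^ k), integral_pow]
  simp

lemma integral_mul_one_sub_pow_le (k : ℕ) {P c : ℝ} (hP : 1 ≤ P) (hc : 0 ≤ c) :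
    ∫ u in (0 : ℝ)..1 / P, (u * P + c) * (1 - u) ^ k ≤
      P / ((k + 1) * (k + 2)) + c / (k + 1) := by
  have hcont : Continuous fun u : ℝ => (u * P + c) * (1 - u) ^ k := by fun_prop
  have hint : ∀ j : ℕ, IntervalIntegrable (fun u : ℝ => (1 - u) ^ j) volume 0 1 :=
    fun j => (by fun_prop : Continuous fun u : ℝ => (1 - u) ^ j).intervalIntegrable _ _
  have hsplit : ∀ u : ℝ, (u * P + c) * (1 - u) ^ k =
      P * ((1 - u) ^ k - (1 - u) ^ (k + 1)) + c * (1 - u) ^ k := fun u => by ring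
  calc ∫ u in (0 : ℝ)..1 / P, (u * P + c) * (1 - u) ^ k
      ≤ ∫ u in (0 : ℝ)..1, (u * P + c) * (1 - u) ^ k := by
        refine intervalIntegral.integral_mono_interval le_rfl (by positivity)
          (div_le_one_of_le₀ hP (by linarith)) ?_ (hcont.intervalIntegrable _ _)
        filter_upwards [ae_restrict_mem measurableSet_Ioc] with u hu
        have : 0 ≤ 1 - u := by linarith [hu.2]
        have : 0 ≤ u := hu.1.le
        positivity
    _ = P * (1 / (k + 1) - 1 / (k + 2)) + c * (1 / (k + 1)) := by
        simp_rw [hsplit]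
        rw [intervalIntegral.integral_add (((hint k).sub (hint (k + 1))).const_mul _)
            ((hint k).const_mul _), intervalIntegral.integral_const_mul,
          intervalIntegral.integral_const_mul, intervalIntegral.integral_sub (hint k) (hint _),
          integral_one_sub_pow, integral_one_sub_pow]
        push_cast
        ring
    _ = P / ((k + 1) * (k + 2)) + c / (k + 1) := by
        field_simp
        ring

theorem measure_setOf_mem_and_forall_eq_setLIntegral {Ω κ β : Type*} [MeasurableSpace Ω]
    [MeasurableSpace β] {μ : Measure Ω} [IsProbabilityMeasure μ] {X : κ → Ω → β}
    (hX : ∀ j, Measurable (X j)) (hindep : iIndepFun X μ) {k : κ} {T : Finset κ} (hk : k ∉ T)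
    {I : Set β} (hI : MeasurableSet I) {S : κ → Set (β × β)} (hS : ∀ j, MeasurableSet (S j)) :
    μ {ω | X k ω ∈ I ∧ ∀ j ∈ T, (X k ω, X j ω) ∈ S j} =
      ∫⁻ x in I, ∏ j ∈ T, μ.map (X j) (Prod.mk x ⁻¹' S j) ∂μ.map (X k) := by
  set W : Ω → (T → β) := fun ω j => X j ω
  have hW : Measurable W := measurable_pi_lambda _ fun j => hX j
  have hkW : IndepFun (X k) W μ :=
    (hindep.indepFun_finset {k} T (Finset.disjoint_singleton_left.2 hk) hX).comp
      (φ := fun v : ({k} : Finset κ) → β => v ⟨k, Finset.mem_singleton_self k⟩)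
      (measurable_pi_apply _) measurable_id
  set G : Set (β × (T → β)) := {z | z.1 ∈ I ∧ ∀ j : T, (z.1, z.2 j) ∈ S j}
  have hG : MeasurableSet G := by
    simp only [G, ofPred_and, ofPred_forall]
    exact (measurable_fst hI).inter <| MeasurableSet.iInter fun j : T =>
      (measurable_fst.prodMk ((measurable_pi_apply j).comp measurable_snd)) (hS j)
  have hsection : ∀ x, μ.map W (Prod.mk x ⁻¹' G) =
      I.indicator (fun x => ∏ j ∈ T, μ.map (X j) (Prod.mk x ⁻¹' S j)) x := by
    intro x
    by_cases hx : x ∈ I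
    · have hpre : W ⁻¹' (Prod.mk x ⁻¹' G) = ⋂ j ∈ T, X j ⁻¹' (Prod.mk x ⁻¹' S j) := by
        ext ω; simp [G, W, hx]
      rw [indicator_of_mem hx, Measure.map_apply hW (measurable_prodMk_left hG), hpre,
        hindep.measure_inter_preimage_eq_mul T fun j _ => measurable_prodMk_left (hS j)]
      exact Finset.prod_congr rfl fun j _ =>
        (Measure.map_apply (hX j) (measurable_prodMk_left (hS j))).symm
    · have hempty : Prod.mk x ⁻¹' G = ∅ := by ext; simp [G, hx]
      rw [indicator_of_notMem hx, hempty, measure_empty]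
  have hevent : {ω | X k ω ∈ I ∧ ∀ j ∈ T, (X k ω, X j ω) ∈ S j} =
      (fun ω => (X k ω, W ω)) ⁻¹' G := by
    ext ω; simp [G, W]
  rw [hevent, ← Measure.map_apply ((hX k).prodMk hW) hG,
    (indepFun_iff_map_prod_eq_prod_map_map (hX k).aemeasurable hW.aemeasurable).1 hkW,
    Measure.prod_apply hG, ← lintegral_indicator hI]
  exact lintegral_congr hsection

theorem measure_setOf_mem_and_mem_and_forall_eq_setLIntegral {Ω κ β : Type*} [MeasurableSpace Ω]
    [MeasurableSpace β] {μ : Measure Ω} [IsProbabilityMeasure μ] {X : κ → Ω → β}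
    (hX : ∀ j, Measurable (X j)) (hindep : iIndepFun X μ) {k t : κ} {T : Finset κ}
    (hkt : k ≠ t) (hk : k ∉ T) (ht : t ∉ T) {I : Set β} (hI : MeasurableSet I)
    {R S : Set (β × β)} (hR : MeasurableSet R) (hS : MeasurableSet S) :
    μ {ω | X k ω ∈ I ∧ (X k ω, X t ω) ∈ R ∧ ∀ j ∈ T, (X k ω, X j ω) ∈ S} =
      ∫⁻ x in I, μ.map (X t) (Prod.mk x ⁻¹' R) * ∏ j ∈ T, μ.map (X j) (Prod.mk x ⁻¹' S)
        ∂μ.map (X k) := by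
  set S' : κ → Set (β × β) := Function.update (fun _ => S) t R
  have hS'T : ∀ j ∈ T, S' j = S := fun j hj =>
    Function.update_of_ne (ne_of_mem_of_not_mem hj ht) _ _
  have hS' : ∀ j, MeasurableSet (S' j) := fun j => by
    simp only [S', Function.update_apply]
    split_ifs <;> assumption
  have hevent : {ω | X k ω ∈ I ∧ (X k ω, X t ω) ∈ R ∧ ∀ j ∈ T, (X k ω, X j ω) ∈ S} =
      {ω | X k ω ∈ I ∧ ∀ j ∈ insert t T, (X k ω, X j ω) ∈ S' j} := by
    ext ω
    simp +contextual only [Set.mem_ofPred_eq, Finset.forall_mem_insert, S',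
      Function.update_self, hS'T]
  rw [hevent, measure_setOf_mem_and_forall_eq_setLIntegral hX hindep
    (by simp [hkt, hk]) hI hS']
  refine lintegral_congr fun x => ?_
  rw [Finset.prod_insert ht, Finset.prod_congr rfl fun j hj => by rw [hS'T j hj],
    show S' t = R from Function.update_self _ _ _]

lemma volume_restrict_Icc_compl_Ioo {a b : ℝ} (ha : 0 ≤ a) (hab : a ≤ b) (hb : b ≤ 1) :
    volume.restrict (Icc (0 : ℝ) 1) (Ioo a b)ᶜ = ENNReal.ofReal (1 - (b - a)) := by
  have : IsProbabilityMeasure (volume.restrict (Icc (0 : ℝ) 1)) := ⟨by simp⟩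
  rw [measure_compl measurableSet_Ioo (measure_ne_top _ _), measure_univ,
    Measure.restrict_apply measurableSet_Ioo,
    inter_eq_self_of_subset_left (Ioo_subset_Icc_self.trans (Icc_subset_Icc ha hb)),
    Real.volume_Ioo, ← ENNReal.ofReal_one, ← ENNReal.ofReal_sub _ (sub_nonneg.2 hab)]

lemma volume_setOf_hatHMH_mul_sub_eq_le (q r : ℕ) {a : ℝ} (ha : 0 < a) (b : ℝ) {x : ℝ}
    (hx : 0 < x) :
    volume {y | hatHMH q r (y * a - b) = hatHMH q r x} ≤
      ENNReal.ofReal (a⁻¹ / 2 ^ r * (x + ((2 : ℝ) ^ 2 ^ q)⁻¹)) := by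
  have hρ : (2 : ℝ) ^ (-rhoHMH q x) ≤ x + ((2 : ℝ) ^ 2 ^ q)⁻¹ :=
    (zpow_neg_rhoHMH_le q hx).trans (max_le_add_of_nonneg hx.le (by positivity))
  calc volume {y | hatHMH q r (y * a - b) = hatHMH q r x}
      = ENNReal.ofReal a⁻¹ * volume {u | hatHMH q r u = hatHMH q r x} :=
        volume_preimage_mul_sub ha b {u | hatHMH q r u = hatHMH q r x}
    _ ≤ ENNReal.ofReal a⁻¹ * ENNReal.ofReal ((2 : ℝ) ^ (-rhoHMH q x) / 2 ^ r) := by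
        gcongr; exact volume_hatHMH_fiber_le q r x
    _ ≤ ENNReal.ofReal (a⁻¹ / 2 ^ r * (x + ((2 : ℝ) ^ 2 ^ q)⁻¹)) := by
        rw [← ENNReal.ofReal_mul (by positivity)]
        gcongr ENNReal.ofReal ?_
        rw [mul_div_assoc', div_mul_eq_mul_div]
        gcongr

lemma setLIntegral_Ioo_mul_one_sub_pow_le (k : ℕ) {P c : ℝ} (hP : 1 ≤ P) (hc : 0 ≤ c)
    (a : ℝ) :
    ∫⁻ x in Ioo a (a + 1 / P), ENNReal.ofReal (((x - a) * P + c) * (1 - (x - a)) ^ k) ≤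
      ENNReal.ofReal (P / ((k + 1) * (k + 2)) + c / (k + 1)) := by
  have hP0 : 0 < P := by linarith
  have hnonneg : ∀ x ∈ Ioo a (a + 1 / P), 0 ≤ ((x - a) * P + c) * (1 - (x - a)) ^ k := by
    intro x hx
    have : x - a < 1 := by linarith [hx.2, div_le_one_of_le₀ hP hP0.le]
    have : 0 ≤ 1 - (x - a) := by linarith
    have : 0 ≤ x - a := by linarith [hx.1]
    positivity
  have hcont : Continuous fun x => ((x - a) * P + c) * (1 - (x - a)) ^ k := by fun_prop
  rw [← ofReal_integral_eq_lintegral_ofReal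
    (hcont.integrableOn_Icc.mono_set Ioo_subset_Icc_self)
    ((ae_restrict_iff' measurableSet_Ioo).2 (ae_of_all _ hnonneg))]
  refine ENNReal.ofReal_le_ofReal ?_
  rw [← integral_Ioc_eq_integral_Ioo,
    ← intervalIntegral.integral_of_le (le_add_of_nonneg_right (by positivity)),
    intervalIntegral.integral_comp_sub_right (fun u => (u * P + c) * (1 - u) ^ k), sub_self,
    add_sub_cancel_left]
  exact integral_mul_one_sub_pow_le k hP hc

def bucketArgminCollision {ι Ω : Type*} (h : ι → Ω → ℝ) (p q r : ℕ) (A : Finset ι) (i : ℕ)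
    (s t : ι) : Set Ω :=
  {ω | ((i : ℝ) / 2 ^ p < h s ω ∧ h s ω < ((i : ℝ) + 1) / 2 ^ p) ∧
    (∀ s' ∈ A, ¬((i : ℝ) / 2 ^ p < h s' ω ∧ h s' ω < h s ω)) ∧
    hatHMH q r (h t ω * 2 ^ p - i) = hatHMH q r (h s ω * 2 ^ p - i)}

lemma measurableSet_bucketArgminCollision {ι Ω : Type*} [MeasurableSpace Ω] {h : ι → Ω → ℝ}
    (p q r : ℕ) {A : Finset ι} (hA : ∀ j ∈ A, Measurable (h j)) (i : ℕ) {s t : ι}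
    (hs : Measurable (h s)) (ht : Measurable (h t)) :
    MeasurableSet (bucketArgminCollision h p q r A i s t) := by
  have hmin : {ω | ∀ s' ∈ A, ¬((i : ℝ) / 2 ^ p < h s' ω ∧ h s' ω < h s ω)} =
      ⋂ s' ∈ A, ({ω | (i : ℝ) / 2 ^ p < h s' ω} ∩ {ω | h s' ω < h s ω})ᶜ := by
    ext; simp
  have hhat (u : ι) (hu : Measurable (h u)) :
      Measurable fun ω => hatHMH q r (h u ω * 2 ^ p - i) :=
    (measurable_hatHMH q r).comp ((hu.mul_const _).sub_const _)
  simp only [bucketArgminCollision, ofPred_and, hmin]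
  exact ((measurableSet_lt measurable_const hs).inter (measurableSet_lt hs measurable_const)).inter
    ((Finset.measurableSet_biInter A fun s' hs' =>
      ((measurableSet_lt measurable_const (hA s' hs')).inter
        (measurableSet_lt (hA s' hs') hs)).compl).inter
      (measurableSet_eq_fun (hhat t ht) (hhat s hs)))

lemma volume_restrict_Icc_fiber_mul_compl_Ioo_pow_le (q r k : ℕ) {P : ℝ} (hP : 1 ≤ P) {i : ℕ}
    (hi : (i : ℝ) + 1 ≤ P) {x : ℝ} (hx : x ∈ Ioo ((i : ℝ) / P) (i / P + 1 / P)) :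
    volume.restrict (Icc (0 : ℝ) 1) {y | hatHMH q r (y * P - i) = hatHMH q r (x * P - i)} *
        volume.restrict (Icc (0 : ℝ) 1) (Ioo ((i : ℝ) / P) x)ᶜ ^ k ≤
      ENNReal.ofReal (P⁻¹ / 2 ^ r) * ENNReal.ofReal
        (((x - i / P) * P + ((2 : ℝ) ^ 2 ^ q)⁻¹) * (1 - (x - i / P)) ^ k) := by
  have hP0 : 0 < P := by linarith
  have hshift : x * P - i = (x - i / P) * P := by field_simp
  have hbucket_le_one : (i : ℝ) / P + 1 / P ≤ 1 := by
    rw [← add_div, div_le_one hP0]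
    exact hi
  have hxlo : 0 < x - i / P := sub_pos.2 hx.1
  have hx1 : 0 ≤ 1 - (x - i / P) := by linarith [hx.2, div_le_one_of_le₀ hP hP0.le]
  have hfiber : volume.restrict (Icc (0 : ℝ) 1)
      {y | hatHMH q r (y * P - i) = hatHMH q r (x * P - i)} ≤
      ENNReal.ofReal (P⁻¹ / 2 ^ r * ((x - i / P) * P + ((2 : ℝ) ^ 2 ^ q)⁻¹)) := by
    refine (Measure.restrict_apply_le _ _).trans
      ((volume_setOf_hatHMH_mul_sub_eq_le q r hP0 i (by rw [hshift]; positivity)).trans_eq ?_)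
    rw [hshift]
  rw [volume_restrict_Icc_compl_Ioo (by positivity) hx.1.le (by linarith [hx.2])]
  calc _ ≤ ENNReal.ofReal (P⁻¹ / 2 ^ r * ((x - i / P) * P + ((2 : ℝ) ^ 2 ^ q)⁻¹)) *
          ENNReal.ofReal (1 - (x - i / P)) ^ k := by gcongr
    _ = _ := by
      rw [← ENNReal.ofReal_pow hx1, ENNReal.ofReal_mul (by positivity),
        ENNReal.ofReal_mul (by positivity), mul_assoc]

theorem measure_bucketArgminCollision_eq_setLIntegral {Ω ι : Type*} [MeasurableSpace Ω]
    {μ : Measure Ω} [IsProbabilityMeasure μ] {F : Finset ι} {h : ι → Ω → ℝ}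
    (hmeas : ∀ j ∈ F, Measurable (h j)) (hindep : iIndepFun (fun j : F => h j) μ)
    (hunif : ∀ j ∈ F, μ.map (h j) = volume.restrict (Icc (0 : ℝ) 1))
    (p q r i : ℕ) {A : Finset ι} (hAF : A ⊆ F) {s t : ι} (hs : s ∈ A) (htF : t ∈ F)
    (htA : t ∉ A) :
    μ (bucketArgminCollision h p q r A i s t) =
      ∫⁻ x in Ioo ((i : ℝ) / 2 ^ p) (i / 2 ^ p + 1 / 2 ^ p),
        volume.restrict (Icc (0 : ℝ) 1)
            {y | hatHMH q r (y * 2 ^ p - i) = hatHMH q r (x * 2 ^ p - i)} *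
          volume.restrict (Icc (0 : ℝ) 1) (Ioo ((i : ℝ) / 2 ^ p) x)ᶜ ^ (A.card - 1)
        ∂volume.restrict (Icc (0 : ℝ) 1) := by
  set T : Finset F := (A.erase s).subtype (· ∈ F)
  have hmemT (j : F) : j ∈ T ↔ (j : ι) ≠ s ∧ (j : ι) ∈ A := by simp [T]
  have hst : s ≠ t := fun he => htA (he ▸ hs)
  have hcardT : T.card = A.card - 1 := by
    rw [Finset.card_subtype, Finset.filter_true_of_mem fun j hj =>
      hAF (Finset.mem_of_mem_erase hj), Finset.card_erase_of_mem hs]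
  have hbelow (ω : Ω) : (∀ j ∈ T, ¬((i : ℝ) / 2 ^ p < h j ω ∧ h j ω < h s ω)) ↔
      ∀ s' ∈ A, ¬((i : ℝ) / 2 ^ p < h s' ω ∧ h s' ω < h s ω) := by
    refine ⟨fun hall s' hs' => ?_, fun hall j hj => hall j ((hmemT j).1 hj).2⟩
    by_cases he : s' = s
    · exact he ▸ fun hlt => lt_irrefl _ hlt.2
    · exact hall ⟨s', hAF hs'⟩ ((hmemT _).2 ⟨he, hs'⟩)
  have hcollide : MeasurableSet
      {z : ℝ × ℝ | hatHMH q r (z.2 * 2 ^ p - i) = hatHMH q r (z.1 * 2 ^ p - i)} :=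
    measurableSet_eq_fun ((measurable_hatHMH q r).comp ((measurable_snd.mul_const _).sub_const _))
      ((measurable_hatHMH q r).comp ((measurable_fst.mul_const _).sub_const _))
  have hnotbelow : MeasurableSet {z : ℝ × ℝ | ¬((i : ℝ) / 2 ^ p < z.2 ∧ z.2 < z.1)} :=
    ((measurableSet_lt measurable_const measurable_snd).inter
      (measurableSet_lt measurable_snd measurable_fst)).compl
  have hevent : bucketArgminCollision h p q r A i s t =
      {ω | h s ω ∈ Ioo ((i : ℝ) / 2 ^ p) (i / 2 ^ p + 1 / 2 ^ p) ∧
        (h s ω, h t ω) ∈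
          {z : ℝ × ℝ | hatHMH q r (z.2 * 2 ^ p - i) = hatHMH q r (z.1 * 2 ^ p - i)} ∧
        ∀ j ∈ T, (h s ω, h j ω) ∈ {z : ℝ × ℝ | ¬((i : ℝ) / 2 ^ p < z.2 ∧ z.2 < z.1)}} := by
    ext ω
    simp only [bucketArgminCollision, Set.mem_ofPred_eq, Set.mem_Ioo, add_div, hbelow]
    tauto
  rw [hevent, measure_setOf_mem_and_mem_and_forall_eq_setLIntegral (X := fun j : F => h j)
      (fun j => hmeas j j.2) hindep (k := ⟨s, hAF hs⟩) (t := ⟨t, htF⟩)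
      (fun he => hst (congrArg Subtype.val he)) (fun hsT => ((hmemT _).1 hsT).1 rfl)
      (fun htT => htA ((hmemT _).1 htT).2) measurableSet_Ioo hcollide hnotbelow,
    hunif s (hAF hs), hunif t htF]
  refine lintegral_congr fun x => ?_
  rw [Finset.prod_congr rfl fun j _ => by rw [hunif j j.2], Finset.prod_const, hcardT]
  rfl

theorem measure_bucketArgminCollision_le {Ω ι : Type*} [MeasurableSpace Ω] {μ : Measure Ω}
    [IsProbabilityMeasure μ] {F : Finset ι} {h : ι → Ω → ℝ}
    (hmeas : ∀ j ∈ F, Measurable (h j)) (hindep : iIndepFun (fun j : F => h j) μ)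
    (hunif : ∀ j ∈ F, μ.map (h j) = volume.restrict (Icc (0 : ℝ) 1))
    (p q r : ℕ) {i : ℕ} (hi : i < 2 ^ p) {A : Finset ι} (hAF : A ⊆ F) {s t : ι}
    (hs : s ∈ A) (htF : t ∈ F) (htA : t ∉ A) :
    μ (bucketArgminCollision h p q r A i s t) ≤
      ENNReal.ofReal (((2 : ℝ) ^ p)⁻¹ / 2 ^ r *
        (2 ^ p / (A.card * (A.card + 1)) + ((2 : ℝ) ^ 2 ^ q)⁻¹ / A.card)) := by
  set P : ℝ := 2 ^ p
  set c : ℝ := ((2 : ℝ) ^ 2 ^ q)⁻¹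
  set lo : ℝ := i / P
  set k := A.card - 1
  have hP : 1 ≤ P := one_le_pow₀ one_le_two
  have hi' : (i : ℝ) + 1 ≤ P := by
    simp only [P]
    exact_mod_cast Nat.succ_le_of_lt hi
  have hk : (k : ℝ) + 1 = A.card := by
    exact_mod_cast Nat.sub_add_cancel (Finset.card_pos.2 ⟨s, hs⟩)
  rw [measure_bucketArgminCollision_eq_setLIntegral hmeas hindep hunif p q r i hAF hs htF htA]
  calc _ ≤ ∫⁻ x in Ioo lo (lo + 1 / P), ENNReal.ofReal (P⁻¹ / 2 ^ r) *
          ENNReal.ofReal (((x - lo) * P + c) * (1 - (x - lo)) ^ k)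
          ∂volume.restrict (Icc (0 : ℝ) 1) :=
        setLIntegral_mono (by fun_prop) fun x hx =>
          volume_restrict_Icc_fiber_mul_compl_Ioo_pow_le q r k hP hi' hx
    _ ≤ ∫⁻ x in Ioo lo (lo + 1 / P), ENNReal.ofReal (P⁻¹ / 2 ^ r) *
          ENNReal.ofReal (((x - lo) * P + c) * (1 - (x - lo)) ^ k) :=
        lintegral_mono' (Measure.restrict_mono le_rfl Measure.restrict_le_self) le_rfl
    _ = ENNReal.ofReal (P⁻¹ / 2 ^ r) * ∫⁻ x in Ioo lo (lo + 1 / P),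
          ENNReal.ofReal (((x - lo) * P + c) * (1 - (x - lo)) ^ k) :=
        lintegral_const_mul _ (by fun_prop)
    _ ≤ ENNReal.ofReal (P⁻¹ / 2 ^ r) * ENNReal.ofReal (P / ((k + 1) * (k + 2)) + c / (k + 1)) := by
        gcongr
        exact setLIntegral_Ioo_mul_one_sub_pow_le k hP (by positivity) lo
    _ = _ := by
        rw [← ENNReal.ofReal_mul (by positivity), ← hk]
        ring_nf

lemma exists_bucketMin_eq {ι Ω : Type*} {h : ι → Ω → ℝ} {p : ℕ} {S : Finset ι} {i : ℕ} {ω : Ω}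
    (hocc : bucketOccupied h p S i ω) :
    ∃ s ∈ S, ((i : ℝ) / 2 ^ p < h s ω ∧ h s ω < ((i : ℝ) + 1) / 2 ^ p) ∧
      (∀ s' ∈ S, ¬((i : ℝ) / 2 ^ p < h s' ω ∧ h s' ω < h s ω)) ∧
      bucketMin h p S i ω = h s ω * 2 ^ p - i := by
  set bucket := S.filter fun s => (i : ℝ) / 2 ^ p < h s ω ∧ h s ω < ((i : ℝ) + 1) / 2 ^ p
  obtain ⟨s, hs, hmin⟩ := bucket.exists_min_image (h · ω) <| by
    obtain ⟨s, hs, hb⟩ := hocc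
    exact ⟨s, Finset.mem_filter.2 ⟨hs, hb⟩⟩
  obtain ⟨hsS, hsb⟩ := Finset.mem_filter.1 hs
  refine ⟨s, hsS, hsb, fun s' hs' hlt =>
    (hmin s' (Finset.mem_filter.2 ⟨hs', hlt.1, hlt.2.trans hsb.2⟩)).not_gt hlt.2, ?_⟩
  refine IsLeast.csInf_eq ⟨⟨s, hsS, hsb, rfl⟩, ?_⟩
  rintro _ ⟨s', hs', hb', rfl⟩
  have := hmin s' (Finset.mem_filter.2 ⟨hs', hb'⟩)
  gcongr

lemma collision_indicator_le_sum {ι Ω : Type*} (h : ι → Ω → ℝ) (p q r : ℕ) (A B : Finset ι)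
    (i : ℕ) (ω : Ω) :
    (if bucketOccupied h p A i ω ∧ bucketOccupied h p B i ω
        ∧ hatHMH q r (bucketMin h p A i ω) = hatHMH q r (bucketMin h p B i ω)
      then (1 : ℝ) else 0) ≤
      ∑ st ∈ A ×ˢ B, (bucketArgminCollision h p q r A i st.1 st.2).indicator 1 ω := by
  have hnonneg : ∀ st ∈ A ×ˢ B,
      0 ≤ (bucketArgminCollision h p q r A i st.1 st.2).indicator (1 : Ω → ℝ) ω :=
    fun _ _ => Set.indicator_nonneg (fun _ _ => zero_le_one) _
  split_ifs with hcoll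
  · obtain ⟨hoccA, hoccB, hhat⟩ := hcoll
    obtain ⟨s, hs, hsb, hsmin, hAmin⟩ := exists_bucketMin_eq hoccA
    obtain ⟨t, ht, -, -, hBmin⟩ := exists_bucketMin_eq hoccB
    have hω : ω ∈ bucketArgminCollision h p q r A i s t :=
      ⟨hsb, hsmin, by rw [← hAmin, ← hBmin, hhat]⟩
    calc (1 : ℝ) = (bucketArgminCollision h p q r A i s t).indicator 1 ω :=
          (Set.indicator_of_mem hω (1 : Ω → ℝ)).symm
      _ ≤ _ := Finset.single_le_sum (a := (s, t)) hnonneg (Finset.mem_product.2 ⟨hs, ht⟩)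
  · exact Finset.sum_nonneg hnonneg

lemma integral_le_sum_measureReal {Ω K : Type*} [MeasurableSpace Ω] {μ : Measure Ω}
    [IsFiniteMeasure μ] {C : Ω → ℝ} (hC0 : 0 ≤ C) {s : Finset K} {E : K → Set Ω}
    (hE : ∀ k ∈ s, MeasurableSet (E k)) (hC : ∀ ω, C ω ≤ ∑ k ∈ s, (E k).indicator 1 ω) :
    ∫ ω, C ω ∂μ ≤ ∑ k ∈ s, μ.real (E k) := by
  have hint : ∀ k ∈ s, Integrable ((E k).indicator (1 : Ω → ℝ)) μ :=
    fun k hk => (integrable_const 1).indicator (hE k hk)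
  calc ∫ ω, C ω ∂μ ≤ ∫ ω, ∑ k ∈ s, (E k).indicator 1 ω ∂μ :=
        integral_mono_of_nonneg (ae_of_all _ hC0) (integrable_finsetSum s hint) (ae_of_all _ hC)
    _ = ∑ k ∈ s, μ.real (E k) := by
        rw [integral_finsetSum s hint]
        exact Finset.sum_congr rfl fun k hk => integral_indicator_one (hE k hk)

lemma two_pow_mul_card_mul_collision_bound_le (p q r : ℕ) {n m : ℕ} (hn : 1 ≤ n)
    (hmn : m ≤ n) :
    (2 : ℝ) ^ p * (n * m) * (((2 : ℝ) ^ p)⁻¹ / 2 ^ r *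
        (2 ^ p / (n * (n + 1)) + ((2 : ℝ) ^ 2 ^ q)⁻¹ / n)) ≤
      2 ^ p * (5 / 2 ^ r + (n : ℝ) / 2 ^ (p + 2 ^ q + r)) := by
  have hn0 : (0 : ℝ) < n := by exact_mod_cast hn
  have hm : (m : ℝ) ≤ n := by exact_mod_cast hmn
  have hlhs : (2 : ℝ) ^ p * (n * m) * (((2 : ℝ) ^ p)⁻¹ / 2 ^ r *
        (2 ^ p / (n * (n + 1)) + ((2 : ℝ) ^ 2 ^ q)⁻¹ / n)) =
      (m / (n + 1) * 2 ^ p + m * ((2 : ℝ) ^ 2 ^ q)⁻¹) / 2 ^ r := by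
    field_simp
  have hrhs : (2 : ℝ) ^ p * (5 / 2 ^ r + (n : ℝ) / 2 ^ (p + 2 ^ q + r)) =
      (5 * 2 ^ p + n * ((2 : ℝ) ^ 2 ^ q)⁻¹) / 2 ^ r := by
    rw [pow_add, pow_add]
    field_simp
  have hfrac : (m : ℝ) / (n + 1) ≤ 5 := by
    rw [div_le_iff₀ (by positivity)]
    linarith
  rw [hlhs, hrhs]
  gcongr

theorem hyperminhash_expected_collisions_bound_general
    {Ω ι : Type*} [MeasurableSpace Ω] [DecidableEq ι]
    (μ : Measure Ω) [IsProbabilityMeasure μ]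
    (p q r : ℕ) (n m : ℕ)
    (A B : Finset ι) (hdisj : Disjoint A B)
    (hcardA : A.card = n) (hcardB : B.card = m)
    (hm : 1 ≤ m) (hmn : m ≤ n)
    (h : ι → Ω → ℝ)
    (hmeas : ∀ s ∈ A ∪ B, Measurable (h s))
    (hindep : iIndepFun (fun s : ↥(A ∪ B) => h s) μ)
    (hunif : ∀ s ∈ A ∪ B, Measure.map (h s) μ = volume.restrict (Set.Icc (0 : ℝ) 1))
    (C : Ω → ℝ)
    (hC : C = fun ω => ∑ i ∈ Finset.range (2 ^ p),
      if bucketOccupied h p A i ω ∧ bucketOccupied h p B i ω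
          ∧ hatHMH q r (bucketMin h p A i ω) = hatHMH q r (bucketMin h p B i ω)
        then (1 : ℝ) else 0) :
    ∫ ω, C ω ∂μ ≤ 2 ^ p * (5 / 2 ^ r + (n : ℝ) / 2 ^ (p + 2 ^ q + r)) := by
  subst hC
  set bound : ℝ := ((2 : ℝ) ^ p)⁻¹ / 2 ^ r *
    (2 ^ p / (n * (n + 1)) + ((2 : ℝ) ^ 2 ^ q)⁻¹ / n)
  have hmeasA : ∀ s ∈ A, Measurable (h s) := fun s hs => hmeas s (Finset.mem_union_left B hs)
  have hmeasB : ∀ t ∈ B, Measurable (h t) := fun t ht => hmeas t (Finset.mem_union_right A ht)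
  calc ∫ ω, _ ∂μ ≤ ∑ k ∈ Finset.range (2 ^ p) ×ˢ (A ×ˢ B),
        μ.real (bucketArgminCollision h p q r A k.1 k.2.1 k.2.2) := by
        refine integral_le_sum_measureReal ?_ ?_ fun ω => ?_
        · exact fun ω => Finset.sum_nonneg fun i _ => by split_ifs <;> norm_num
        · simp only [Finset.mem_product]
          exact fun k hk => measurableSet_bucketArgminCollision p q r hmeasA k.1
            (hmeasA _ hk.2.1) (hmeasB _ hk.2.2)
        · rw [Finset.sum_product]
          exact Finset.sum_le_sum fun i _ => collision_indicator_le_sum h p q r A B i ω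
    _ ≤ ∑ k ∈ Finset.range (2 ^ p) ×ˢ (A ×ˢ B), bound := by
        refine Finset.sum_le_sum fun k hk => ?_
        simp only [Finset.mem_product, Finset.mem_range] at hk
        refine ENNReal.toReal_le_of_le_ofReal (by positivity) ?_
        simp only [bound, ← hcardA]
        exact measure_bucketArgminCollision_le hmeas hindep hunif p q r hk.1
            Finset.subset_union_left hk.2.1 (Finset.mem_union_right A hk.2.2)
            (Finset.disjoint_right.1 hdisj hk.2.2)
    _ ≤ 2 ^ p * (5 / 2 ^ r + (n : ℝ) / 2 ^ (p + 2 ^ q + r)) := by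
        rw [Finset.sum_const, Finset.card_product, Finset.card_product, Finset.card_range,
          hcardA, hcardB, nsmul_eq_mul]
        push_cast
        exact two_pow_mul_card_mul_collision_bound_le p q r (hm.trans hmn) hmn

/-- **Expected number of HyperMinHash bucket collisions** (Theorem `thm:main`):
for disjoint sets `A`, `B` with `|A| = n ≥ 1`, `|B| = m ≥ 1`, `m ≤ n ≤ 2^{2^q + r}`,
and independent uniform-`[0,1]` hashes on `A ∪ B`, the total number of bucket
collisions `C = ∑_{i<2^p} Z_i` satisfies `E[C] ≤ 2^p (5/2^r + n/2^{p + 2^q + r})`. -/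
theorem hyperminhash_expected_collisions_bound
    {Ω ι : Type*} [MeasurableSpace Ω] [DecidableEq ι]
    (μ : Measure Ω) [IsProbabilityMeasure μ]
    (p q r : ℕ) (n m : ℕ)
    (A B : Finset ι) (hdisj : Disjoint A B)
    (hcardA : A.card = n) (hcardB : B.card = m)
    (hm : 1 ≤ m) (hmn : m ≤ n) (hnb : n ≤ 2 ^ (2 ^ q + r))
    (h : ι → Ω → ℝ)
    (hmeas : ∀ s ∈ A ∪ B, Measurable (h s))
    (hindep : iIndepFun (fun s : ↥(A ∪ B) => h s) μ)
    (hunif : ∀ s ∈ A ∪ B, Measure.map (h s) μ = volume.restrict (Set.Icc (0 : ℝ) 1))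
    (C : Ω → ℝ)
    (hC : C = fun ω => ∑ i ∈ Finset.range (2 ^ p),
      if bucketOccupied h p A i ω ∧ bucketOccupied h p B i ω
          ∧ hatHMH q r (bucketMin h p A i ω) = hatHMH q r (bucketMin h p B i ω)
        then (1 : ℝ) else 0) :
    ∫ ω, C ω ∂μ ≤ 2 ^ p * (5 / 2 ^ r + (n : ℝ) / 2 ^ (p + 2 ^ q + r)) :=
  hyperminhash_expected_collisions_bound_general μ p q r n m A B hdisj hcardA hcardB hm hmn h hmeas
    hindep hunif C hC
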